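/- The set of nonnegative integer solutions of a finite system of homogeneous linear equations with integer coefficients is an additively closed submonoid of ℕ^n that is finitely generated (by a finite set of fundamental solutions). -/

import Mathlib

/-- The set of nonnegative integer solutions of a finite homogeneous system of
linear equations with integer coefficients is an additive submonoid of `ℕ^n`
which is finitely generated (by a finite set of fundamental solutions). -/
theorem solution_set_is_fg_submonoid {m n : ℕ} (A : Matrix (Fin m) (Fin n) ℤ) :
    ∃ S : AddSubmonoid (Fin n → ℕ),
      (S : Set (Fin n → ℕ)) = {x | A.mulVec (fun i => (x i : ℤ)) = 0} ∧
      S.FG := by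
  let f : (Fin n → ℕ) →+ (Fin m → ℤ) :=
    A.mulVecLin.toAddMonoidHom.comp ((Nat.castAddMonoidHom ℤ).compLeft (Fin n))
  -- Gordan's lemma: the minimal nonzero solutions are an antichain of `ℕ^n`, hence finite by
  -- Dickson's lemma, and they generate since the solution set is closed under `y ≤ x ↦ x - y`.
  exact ⟨f.eqLocusM 0, rfl, AddSubmonoid.fg_eqLocusM f 0⟩
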